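/- Let m ≥ 1, let b be an m×m real matrix, let ψ : Fin m → ℝ, and let ψ̂, χ : Fin m → Fin m → Fin m → ℝ. Suppose that for all sufficiently large r ∈ ℝ (so that r·1 − b is invertible) and for all i, j, k: (1/2)·∑_l ψ_l·( ρ(r)_{l i}·ρ(r)_{j k} − ρ(r)_{l j}·ρ(r)_{i k} ) + ∑_l ρ(r)_{l k}·ψ̂_{i j l} = ∑_{p,q} ρ(r)_{p i}·ρ(r)_{q j}·( χ_{p q k} − ((b_{p q} − b_{q p})/2)·∑_s ψ_s·ρ(r)_{s k} ), where ρ(r) = (r·1 − b)⁻¹. Then ψ̂ = 0. -/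

import Mathlib

open Matrix Filter Topology

/-!
Since `ρ(r) = r⁻¹ • 1 + o(r⁻¹)`, the rescaled resolvent `r • ρ(r)` tends to `1` while `ρ(r)`
itself tends to `0`. Multiply both expressions for `Ψ_{ijk}` by `r` and let `r → ∞`: on the left
the quadratic terms vanish and the term linear in `ρ` tends to `ψ̂_{ijk}`, while on the right
every term is at least quadratic in `ρ` and the limit is `0`.
-/

theorem Matrix.inv_smul₀ {n K : Type*} [Fintype n] [DecidableEq n] [Field K]
    (r : K) (A : Matrix n n K) : (r • A)⁻¹ = r⁻¹ • A⁻¹ := by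
  rcases eq_or_ne r 0 with rfl | hr
  · simp
  by_cases hA : IsUnit A.det
  · exact Matrix.inv_smul' _ (Units.mk0 r hr) hA
  · have hrA : ¬IsUnit (r • A).det := by
      rwa [det_smul, IsUnit.mul_iff, and_iff_right (isUnit_iff_ne_zero.2 (pow_ne_zero _ hr))]
    rw [nonsing_inv_apply_not_isUnit _ hA, nonsing_inv_apply_not_isUnit _ hrA, smul_zero]

theorem tendsto_smul_inv_smul_one_sub {n : Type*} [Fintype n] [DecidableEq n]
    (b : Matrix n n ℝ) :
    Tendsto (fun r : ℝ => r • (r • (1 : Matrix n n ℝ) - b)⁻¹) atTop (𝓝 1) := by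
  have hsub : Tendsto (fun r : ℝ => (1 : Matrix n n ℝ) - r⁻¹ • b) atTop (𝓝 1) := by
    simpa using tendsto_const_nhds.sub (tendsto_inv_atTop_zero.smul_const (M := ℝ) b)
  have hinv : ContinuousAt Inv.inv (1 : Matrix n n ℝ) := continuousAt_matrix_inv _ (by simp)
  refine (inv_one (G := Matrix n n ℝ) ▸ hinv.tendsto.comp hsub).congr' ?_
  filter_upwards [eventually_ne_atTop 0] with r hr
  rw [Function.comp_apply, ← inv_smul_smul₀ hr ((1 : Matrix n n ℝ) - r⁻¹ • b), smul_sub,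
    smul_inv_smul₀ hr, Matrix.inv_smul₀, inv_inv]

theorem tendsto_zero_of_tendsto_smul {E : Type*} [TopologicalSpace E] [AddCommGroup E]
    [Module ℝ E] [ContinuousSMul ℝ E] {f : ℝ → E} {L : E}
    (h : Tendsto (fun r => r • f r) atTop (𝓝 L)) : Tendsto f atTop (𝓝 0) := by
  refine (zero_smul ℝ L ▸ tendsto_inv_atTop_zero.smul h).congr' ?_
  filter_upwards [eventually_ne_atTop 0] with r hr
  exact inv_smul_smul₀ hr (f r)

section ResolventAsymptotics

variable {n : Type*} [DecidableEq n] {ρ : ℝ → Matrix n n ℝ}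

theorem tendsto_mul_apply_of_tendsto_smul_one (hρ : Tendsto (fun r => r • ρ r) atTop (𝓝 1))
    (a c : n) : Tendsto (fun r => r * ρ r a c) atTop (𝓝 ((1 : Matrix n n ℝ) a c)) :=
  (hρ.apply_nhds a).apply_nhds c

theorem tendsto_apply_of_tendsto_smul_one (hρ : Tendsto (fun r => r • ρ r) atTop (𝓝 1))
    (a c : n) : Tendsto (fun r => ρ r a c) atTop (𝓝 0) :=
  ((tendsto_zero_of_tendsto_smul hρ).apply_nhds a).apply_nhds c

variable [Fintype n]

/-- `Ψ_{ijk}` as integrated from eq. (30), written in terms of the resolvent `M = ρ(r)`. -/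
noncomputable def psiOfHat (ψ : n → ℝ) (ψhat : n → n → n → ℝ) (M : Matrix n n ℝ)
    (i j k : n) : ℝ :=
  (1 / 2) * (∑ l, ψ l * (M l i * M j k - M l j * M i k)) + ∑ l, M l k * ψhat i j l

/-- `Ψ_{ijk}` as integrated from eq. (31), written in terms of the resolvent `M = ρ(r)`. -/
noncomputable def psiOfChi (b : Matrix n n ℝ) (ψ : n → ℝ) (χ : n → n → n → ℝ)
    (M : Matrix n n ℝ) (i j k : n) : ℝ :=
  ∑ p, ∑ q, M p i * M q j * (χ p q k - ((b p q - b q p) / 2) * ∑ s, ψ s * M s k)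

theorem tendsto_mul_psiOfHat (hρ : Tendsto (fun r => r • ρ r) atTop (𝓝 1))
    (ψ : n → ℝ) (ψhat : n → n → n → ℝ) (i j k : n) :
    Tendsto (fun r => r * psiOfHat ψ ψhat (ρ r) i j k) atTop (𝓝 (ψhat i j k)) := by
  have hlim := (tendsto_const_nhds (x := (1 / 2 : ℝ))).mul (tendsto_finsetSum Finset.univ
      fun l _ => (tendsto_const_nhds (x := ψ l)).mul
        (((tendsto_mul_apply_of_tendsto_smul_one hρ l i).mul
            (tendsto_apply_of_tendsto_smul_one hρ j k)).sub
          ((tendsto_mul_apply_of_tendsto_smul_one hρ l j).mul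
            (tendsto_apply_of_tendsto_smul_one hρ i k)))) |>.add
    (tendsto_finsetSum Finset.univ fun l _ =>
      (tendsto_mul_apply_of_tendsto_smul_one hρ l k).mul (tendsto_const_nhds (x := ψhat i j l)))
  simp only [mul_zero, sub_zero, Finset.sum_const_zero, zero_add, one_apply, ite_mul, one_mul,
    zero_mul, Finset.sum_ite_eq', Finset.mem_univ, if_true] at hlim
  refine hlim.congr fun r => ?_
  simp only [psiOfHat, mul_add, Finset.mul_sum]
  congr 1 <;> exact Finset.sum_congr rfl fun l _ => by ring

theorem tendsto_mul_psiOfChi (hρ : Tendsto (fun r => r • ρ r) atTop (𝓝 1))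
    (b : Matrix n n ℝ) (ψ : n → ℝ) (χ : n → n → n → ℝ) (i j k : n) :
    Tendsto (fun r => r * psiOfChi b ψ χ (ρ r) i j k) atTop (𝓝 0) := by
  have hlim := tendsto_finsetSum Finset.univ fun p _ => tendsto_finsetSum Finset.univ fun q _ =>
    ((tendsto_mul_apply_of_tendsto_smul_one hρ p i).mul
        (tendsto_apply_of_tendsto_smul_one hρ q j)).mul
      ((tendsto_const_nhds (x := χ p q k)).sub
        ((tendsto_const_nhds (x := (b p q - b q p) / 2)).mul
          (tendsto_finsetSum Finset.univ fun s _ =>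
            (tendsto_const_nhds (x := ψ s)).mul (tendsto_apply_of_tendsto_smul_one hρ s k))))
  simp only [mul_zero, zero_mul, Finset.sum_const_zero] at hlim
  refine hlim.congr fun r => ?_
  simp only [psiOfChi, Finset.mul_sum]
  exact Finset.sum_congr rfl fun p _ => Finset.sum_congr rfl fun q _ => by ring

end ResolventAsymptotics

theorem psi_hat_vanishes_general
    (m : ℕ) (b : Matrix (Fin m) (Fin m) ℝ)
    (ψ : Fin m → ℝ) (ψhat χ : Fin m → Fin m → Fin m → ℝ)
    (h : ∃ R : ℝ, ∀ r : ℝ, R ≤ r →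
      IsUnit (r • (1 : Matrix (Fin m) (Fin m) ℝ) - b) ∧
      ∀ i j k,
        (1 / 2) * (∑ l, ψ l *
            ((r • (1 : Matrix (Fin m) (Fin m) ℝ) - b)⁻¹ l i
                * (r • (1 : Matrix (Fin m) (Fin m) ℝ) - b)⁻¹ j k
              - (r • (1 : Matrix (Fin m) (Fin m) ℝ) - b)⁻¹ l j
                * (r • (1 : Matrix (Fin m) (Fin m) ℝ) - b)⁻¹ i k))
          + ∑ l, (r • (1 : Matrix (Fin m) (Fin m) ℝ) - b)⁻¹ l k * ψhat i j l
        = ∑ p, ∑ q, (r • (1 : Matrix (Fin m) (Fin m) ℝ) - b)⁻¹ p i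
            * (r • (1 : Matrix (Fin m) (Fin m) ℝ) - b)⁻¹ q j
            * (χ p q k - ((b p q - b q p) / 2)
                * ∑ s, ψ s * (r • (1 : Matrix (Fin m) (Fin m) ℝ) - b)⁻¹ s k)) :
    ψhat = 0 := by
  obtain ⟨R, hR⟩ := h
  have hρ := tendsto_smul_inv_smul_one_sub b
  funext i j k
  have hagree : (fun r => r * psiOfHat ψ ψhat (r • 1 - b)⁻¹ i j k)
      =ᶠ[atTop] fun r => r * psiOfChi b ψ χ (r • 1 - b)⁻¹ i j k := by
    filter_upwards [eventually_ge_atTop R] with r hr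
    exact congrArg (r * ·) ((hR r hr).2 i j k)
  exact tendsto_nhds_unique ((tendsto_mul_psiOfHat hρ ψ ψhat i j k).congr' hagree)
    (tendsto_mul_psiOfChi hρ b ψ χ i j k)

/-- **The step `ψ̂ = 0` (comparison of eqs. (29)–(31)).**
If the two integrated forms of `Ψ_{ijk}` agree for all sufficiently large `r`
(with `ρ(r) = (r·1 - b)⁻¹`), then `ψ̂ = 0`. -/
theorem psi_hat_vanishes
    (m : ℕ) (hm : 1 ≤ m) (b : Matrix (Fin m) (Fin m) ℝ)
    (ψ : Fin m → ℝ) (ψhat χ : Fin m → Fin m → Fin m → ℝ)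
    (h : ∃ R : ℝ, ∀ r : ℝ, R ≤ r →
      IsUnit (r • (1 : Matrix (Fin m) (Fin m) ℝ) - b) ∧
      ∀ i j k,
        (1 / 2) * (∑ l, ψ l *
            ((r • (1 : Matrix (Fin m) (Fin m) ℝ) - b)⁻¹ l i
                * (r • (1 : Matrix (Fin m) (Fin m) ℝ) - b)⁻¹ j k
              - (r • (1 : Matrix (Fin m) (Fin m) ℝ) - b)⁻¹ l j
                * (r • (1 : Matrix (Fin m) (Fin m) ℝ) - b)⁻¹ i k))
          + ∑ l, (r • (1 : Matrix (Fin m) (Fin m) ℝ) - b)⁻¹ l k * ψhat i j l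
        = ∑ p, ∑ q, (r • (1 : Matrix (Fin m) (Fin m) ℝ) - b)⁻¹ p i
            * (r • (1 : Matrix (Fin m) (Fin m) ℝ) - b)⁻¹ q j
            * (χ p q k - ((b p q - b q p) / 2)
                * ∑ s, ψ s * (r • (1 : Matrix (Fin m) (Fin m) ℝ) - b)⁻¹ s k)) :
    ψhat = 0 :=
  psi_hat_vanishes_general m b ψ ψhat χ h
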